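/- Let ω : ℝ → ℝ³ be twice continuously differentiable, set Ω(t) = [ω(t)]×, and let R : ℝ → SO(3) be differentiable with dR/dt = R(t)Ω(t). Define A(t) = [[0, I₃, 0], [0, 0, −R(t)], [0, 0, 0]] (9×9 blocks), the block matrix Ξ(t) = [[0, 0, I₃], [0, I₃, RΩRᵀ], [−Rᵀ, −ΩRᵀ, −(Ω² − Ω̇)Rᵀ]] whose block columns are denoted γ₁, γ₂, γ₃, and γ₄(t) = A(t)γ₃(t) − (d/dt)γ₃(t). Then Ξ(t) is invertible for every t, and A(t)Ξ(t) − (d/dt)Ξ(t) = Ξ(t) A_o + γ₄(t) C_o, where A_o = [[0,0,0],[I₃,0,0],[0,I₃,0]] and C_o = [0, 0, I₃]. -/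

import Mathlib

open Matrix Filter Real Topology

noncomputable section

/-- `M ⪯ 0`: a real matrix is negative semidefinite iff `-M` is positive semidefinite. -/
def Matrix.NegSemidef {n : Type*} [Fintype n] (M : Matrix n n ℝ) : Prop := (-M).PosSemidef

/-- `M ≺ 0`: a real matrix is negative definite iff `-M` is positive definite. -/
def Matrix.NegDef {n : Type*} [Fintype n] (M : Matrix n n ℝ) : Prop := (-M).PosDef

/-- ℝ³ with the Euclidean norm. -/
abbrev E3 := EuclideanSpace ℝ (Fin 3)

/-- 3×3 real matrices. -/
abbrev M3 := Matrix (Fin 3) (Fin 3) ℝ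

/-- Index type used for 9-dimensional block vectors/matrices with 3×3 blocks. -/
abbrev I9 := Fin 3 ⊕ (Fin 3 ⊕ Fin 3)

/-- `R ∈ SO(3)`, i.e. `RᵀR = I₃` and `det R = 1`. -/
def SO3 (R : M3) : Prop := Rᵀ * R = 1 ∧ R.det = 1

/-- The skew-symmetric matrix `[w]ₓ` with `[w]ₓ u = w × u`. -/
def skew (w : E3) : M3 :=
  !![0, -w 2, w 1; w 2, 0, -w 0; -w 1, w 0, 0]

/-- 9×9 block matrix built from nine 3×3 blocks. -/
def blk3 (a b c d e f g h i : M3) : Matrix I9 I9 ℝ :=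
  Matrix.of fun x y =>
    match x, y with
    | .inl x, .inl y => a x y
    | .inl x, .inr (.inl y) => b x y
    | .inl x, .inr (.inr y) => c x y
    | .inr (.inl x), .inl y => d x y
    | .inr (.inl x), .inr (.inl y) => e x y
    | .inr (.inl x), .inr (.inr y) => f x y
    | .inr (.inr x), .inl y => g x y
    | .inr (.inr x), .inr (.inl y) => h x y
    | .inr (.inr x), .inr (.inr y) => i x y

/-- 3×9 block row matrix built from three 3×3 blocks. -/
def rowblk (a b c : M3) : Matrix (Fin 3) I9 ℝ :=
  Matrix.of fun x y =>
    match y with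
    | .inl y => a x y
    | .inr (.inl y) => b x y
    | .inr (.inr y) => c x y

/-- 9×3 block column matrix built from three 3×3 blocks. -/
def colblk (a b c : M3) : Matrix I9 (Fin 3) ℝ :=
  Matrix.of fun x y =>
    match x with
    | .inl x => a x y
    | .inr (.inl x) => b x y
    | .inr (.inr x) => c x y

/-- 9×9 matrix assembled from three 9×3 block columns. -/
def cols3 (a b c : Matrix I9 (Fin 3) ℝ) : Matrix I9 I9 ℝ :=
  Matrix.of fun x y =>
    match y with
    | .inl y => a x y
    | .inr (.inl y) => b x y
    | .inr (.inr y) => c x y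

/-- 9×9 matrix assembled from three 3×9 block rows. -/
def rows3 (a b c : Matrix (Fin 3) I9 ℝ) : Matrix I9 I9 ℝ :=
  Matrix.of fun x y =>
    match x with
    | .inl x => a x y
    | .inr (.inl x) => b x y
    | .inr (.inr x) => c x y

/-!
Write `Ξ = [γ₁ γ₂ γ₃]` by block columns. Right multiplication by `A_o` shifts the columns,
`Ξ A_o = [γ₂ γ₃ 0]`, and `γ₄ C_o = [0 0 γ₄]`, so the identity says exactly that
`γ₂ = Aγ₁ − γ̇₁` and `γ₃ = Aγ₂ − γ̇₂`; both follow from `d(Rᵀ)/dt = −ΩRᵀ` and `RRᵀ = I₃`.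
Invertibility holds because `Ξ` is block anti-triangular with invertible anti-diagonal blocks
`I₃, I₃, −Rᵀ`.
-/

section BlockAlgebra

variable (a b c d e f g h i a' b' c' d' e' f' g' h' i' x y z : M3)

lemma blk3_mul :
    blk3 a b c d e f g h i * blk3 a' b' c' d' e' f' g' h' i' =
      blk3 (a * a' + b * d' + c * g') (a * b' + b * e' + c * h') (a * c' + b * f' + c * i')
        (d * a' + e * d' + f * g') (d * b' + e * e' + f * h') (d * c' + e * f' + f * i')
        (g * a' + h * d' + i * g') (g * b' + h * e' + i * h') (g * c' + h * f' + i * i') := by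
  ext (p | p | p) (q | q | q) <;>
    simp [blk3, Matrix.mul_apply, Fintype.sum_sum_type] <;> ring

lemma blk3_mul_colblk :
    blk3 a b c d e f g h i * colblk x y z =
      colblk (a * x + b * y + c * z) (d * x + e * y + f * z) (g * x + h * y + i * z) := by
  ext (p | p | p) q <;>
    simp [blk3, colblk, Matrix.mul_apply, Fintype.sum_sum_type] <;> ring

lemma colblk_sub : colblk a b c - colblk a' b' c' = colblk (a - a') (b - b') (c - c') := by
  ext (p | p | p) q <;> rfl

lemma one_eq_blk3 : (1 : Matrix I9 I9 ℝ) = blk3 1 0 0 0 1 0 0 0 1 := by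
  ext (p | p | p) (q | q | q) <;> simp [blk3, Matrix.one_apply]

lemma blk3_eq_cols3 :
    blk3 a b c d e f g h i = cols3 (colblk a d g) (colblk b e h) (colblk c f i) := by
  ext (p | p | p) (q | q | q) <;> rfl

end BlockAlgebra

section ColumnAlgebra

variable (M : Matrix I9 I9 ℝ) (x y z x' y' z' : Matrix I9 (Fin 3) ℝ)

lemma mul_cols3 : M * cols3 x y z = cols3 (M * x) (M * y) (M * z) := by
  ext p (q | q | q) <;> simp [cols3, Matrix.mul_apply]

lemma cols3_sub : cols3 x y z - cols3 x' y' z' = cols3 (x - x') (y - y') (z - z') := by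
  ext p (q | q | q) <;> rfl

lemma cols3_add : cols3 x y z + cols3 x' y' z' = cols3 (x + x') (y + y') (z + z') := by
  ext p (q | q | q) <;> rfl

lemma cols3_mul_shift : cols3 x y z * blk3 0 0 0 1 0 0 0 1 0 = cols3 y z 0 := by
  ext p (q | q | q) <;>
    simp [cols3, blk3, Matrix.mul_apply, Fintype.sum_sum_type, Matrix.one_apply]

lemma mul_rowblk_last : x * rowblk 0 0 1 = cols3 0 0 x := by
  ext p (q | q | q) <;> simp [cols3, rowblk, Matrix.mul_apply, Matrix.one_apply]

end ColumnAlgebra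

lemma blk3_antidiag_mul_eq_one {c c' e e' g g' : M3} (f h i : M3)
    (hc : c * c' = 1) (he : e * e' = 1) (hg : g * g' = 1) :
    blk3 0 0 c 0 e f g h i *
        blk3 (g' * (h * e' * f * c' - i * c')) (-(g' * h * e')) g' (-(e' * f * c')) e' 0 c' 0 0 =
      1 := by
  have he' : ∀ X : M3, e * (e' * X) = X := fun X => by rw [← mul_assoc, he, one_mul]
  have hg' : ∀ X : M3, g * (g' * X) = X := fun X => by rw [← mul_assoc, hg, one_mul]
  rw [blk3_mul, one_eq_blk3]
  congr 1 <;>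
    simp only [mul_zero, zero_mul, add_zero, zero_add, mul_neg, neg_zero, mul_sub, mul_assoc,
      hc, he, hg, he', hg'] <;>
    abel

lemma isUnit_blk3_antidiag {c e g : M3} (f h i : M3) (hc : IsUnit c) (he : IsUnit e)
    (hg : IsUnit g) : IsUnit (blk3 0 0 c 0 e f g h i) := by
  obtain ⟨c', hc'⟩ := hc.exists_right_inv
  obtain ⟨e', he'⟩ := he.exists_right_inv
  obtain ⟨g', hg'⟩ := hg.exists_right_inv
  exact .of_mul_eq_one _ (blk3_antidiag_mul_eq_one f h i hc' he' hg')

section EntrywiseDeriv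

variable {m n p : Type*}

/- Matrices carry no global norm in Mathlib, so derivatives of matrix-valued functions are
taken entry by entry, as in the statement. -/
def HasEntrywiseDerivAt (f : ℝ → Matrix m n ℝ) (F : Matrix m n ℝ) (t : ℝ) : Prop :=
  ∀ i j, HasDerivAt (fun s => f s i j) (F i j) t

def entrywiseDeriv (f : ℝ → Matrix m n ℝ) (t : ℝ) : Matrix m n ℝ :=
  Matrix.of fun i j => deriv (fun s => f s i j) t

variable {f : ℝ → Matrix m n ℝ} {F : Matrix m n ℝ} {t : ℝ}

lemma HasEntrywiseDerivAt.entrywiseDeriv_eq (hf : HasEntrywiseDerivAt f F t) :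
    entrywiseDeriv f t = F := by
  ext i j
  exact (hf i j).deriv

lemma hasEntrywiseDerivAt_const (c : Matrix m n ℝ) :
    HasEntrywiseDerivAt (fun _ => c) 0 t :=
  fun i j => hasDerivAt_const t (c i j)

lemma HasEntrywiseDerivAt.neg (hf : HasEntrywiseDerivAt f F t) :
    HasEntrywiseDerivAt (fun s => -f s) (-F) t :=
  fun i j => (hf i j).neg

lemma HasEntrywiseDerivAt.transpose (hf : HasEntrywiseDerivAt f F t) :
    HasEntrywiseDerivAt (fun s => (f s)ᵀ) Fᵀ t :=
  fun i j => hf j i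

lemma HasEntrywiseDerivAt.mul [Fintype n] {g : ℝ → Matrix n p ℝ} {G : Matrix n p ℝ}
    (hf : HasEntrywiseDerivAt f F t) (hg : HasEntrywiseDerivAt g G t) :
    HasEntrywiseDerivAt (fun s => f s * g s) (F * g t + f t * G) t := fun i j => by
  simpa [Matrix.mul_apply, Finset.sum_add_distrib] using
    HasDerivAt.fun_sum (u := Finset.univ) fun k _ => (hf i k).mul (hg k j)

end EntrywiseDeriv

lemma HasEntrywiseDerivAt.colblk {x y z : ℝ → M3} {X Y Z : M3} {t : ℝ}
    (hx : HasEntrywiseDerivAt x X t) (hy : HasEntrywiseDerivAt y Y t)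
    (hz : HasEntrywiseDerivAt z Z t) :
    HasEntrywiseDerivAt (fun s => colblk (x s) (y s) (z s)) (colblk X Y Z) t := by
  rintro (i | i | i) j
  exacts [hx i j, hy i j, hz i j]

lemma entrywiseDeriv_cols3 (x y z : ℝ → Matrix I9 (Fin 3) ℝ) (t : ℝ) :
    entrywiseDeriv (fun s => cols3 (x s) (y s) (z s)) t =
      cols3 (entrywiseDeriv x t) (entrywiseDeriv y t) (entrywiseDeriv z t) := by
  ext i (j | j | j) <;> rfl

lemma hasEntrywiseDerivAt_skew {ω : ℝ → E3} {ω' : E3} {t : ℝ} (hω : HasDerivAt ω ω' t) :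
    HasEntrywiseDerivAt (fun s => skew (ω s)) (skew ω') t := by
  have hc (k : Fin 3) : HasDerivAt (fun s => ω s k) (ω' k) t :=
    (EuclideanSpace.proj k : E3 →L[ℝ] ℝ).hasFDerivAt.comp_hasDerivAt t hω
  intro i j
  fin_cases i <;> fin_cases j <;> simp [skew]
  all_goals first
    | exact hasDerivAt_const _ _
    | exact hc _
    | exact (hc _).neg

lemma skew_transpose (w : E3) : (skew w)ᵀ = -skew w := by
  ext i j; fin_cases i <;> fin_cases j <;> simp [skew]

section RigidBody

variable {R : ℝ → M3} {ω : ℝ → E3} {t : ℝ}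

lemma hasEntrywiseDerivAt_neg_transpose (hR : HasEntrywiseDerivAt R (R t * skew (ω t)) t) :
    HasEntrywiseDerivAt (fun s => -(R s)ᵀ) (skew (ω t) * (R t)ᵀ) t := by
  simpa [Matrix.transpose_mul, skew_transpose] using hR.transpose.neg

lemma hasEntrywiseDerivAt_neg_skew_mul_transpose {ω' : E3} (hω : HasDerivAt ω ω' t)
    (hR : HasEntrywiseDerivAt R (R t * skew (ω t)) t) :
    HasEntrywiseDerivAt (fun s => -(skew (ω s) * (R s)ᵀ))
      ((skew (ω t) * skew (ω t) - skew ω') * (R t)ᵀ) t := by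
  convert ((hasEntrywiseDerivAt_skew hω).mul hR.transpose).neg using 1
  rw [Matrix.transpose_mul, skew_transpose]
  noncomm_ring

end RigidBody

lemma intertwining_of_column_recursion (A : Matrix I9 I9 ℝ)
    (γ₁ γ₂ γ₃ : ℝ → Matrix I9 (Fin 3) ℝ) (t : ℝ)
    (h₁ : A * γ₁ t - entrywiseDeriv γ₁ t = γ₂ t) (h₂ : A * γ₂ t - entrywiseDeriv γ₂ t = γ₃ t) :
    A * cols3 (γ₁ t) (γ₂ t) (γ₃ t) - entrywiseDeriv (fun s => cols3 (γ₁ s) (γ₂ s) (γ₃ s)) t =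
      cols3 (γ₁ t) (γ₂ t) (γ₃ t) * blk3 0 0 0 1 0 0 0 1 0 +
        (A * γ₃ t - entrywiseDeriv γ₃ t) * rowblk 0 0 1 := by
  rw [mul_cols3, entrywiseDeriv_cols3, cols3_sub, h₁, h₂, cols3_mul_shift, mul_rowblk_last,
    cols3_add]
  simp

theorem stmt_12 (ω ω' : ℝ → E3)
    (hω : ∀ t, HasDerivAt ω (ω' t) t)
    (R : ℝ → M3) (hSO : ∀ t, SO3 (R t))
    (hR : ∀ t i j, HasDerivAt (fun s => R s i j) ((R t * skew (ω t)) i j) t) :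
    ∀ t : ℝ,
      let A : ℝ → Matrix I9 I9 ℝ := fun s => blk3 0 1 0 0 0 (-(R s)) 0 0 0
      let Ξ : ℝ → Matrix I9 I9 ℝ := fun s =>
        blk3 0 0 1
             0 1 (R s * skew (ω s) * (R s)ᵀ)
             (-(R s)ᵀ) (-(skew (ω s) * (R s)ᵀ))
             (-((skew (ω s) * skew (ω s) - skew (ω' s)) * (R s)ᵀ))
      let γ₃ : ℝ → Matrix I9 (Fin 3) ℝ := fun s =>
        colblk 1 (R s * skew (ω s) * (R s)ᵀ)
          (-((skew (ω s) * skew (ω s) - skew (ω' s)) * (R s)ᵀ))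
      let γ₄ : ℝ → Matrix I9 (Fin 3) ℝ := fun s =>
        A s * γ₃ s - Matrix.of fun i j => deriv (fun τ => γ₃ τ i j) s
      let Aₒ : Matrix I9 I9 ℝ := blk3 0 0 0 1 0 0 0 1 0
      let Cₒ : Matrix (Fin 3) I9 ℝ := rowblk 0 0 1
      IsUnit (Ξ t) ∧
      A t * Ξ t - (Matrix.of fun i j => deriv (fun τ => Ξ τ i j) t) =
        Ξ t * Aₒ + γ₄ t * Cₒ := by
  intro t A Ξ γ₃ γ₄ Aₒ Cₒ
  have hRtR : (R t)ᵀ * R t = 1 := (hSO t).1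
  have hRRt : R t * (R t)ᵀ = 1 := mul_eq_one_comm.mp hRtR
  refine ⟨isUnit_blk3_antidiag _ _ _ isUnit_one isUnit_one (IsUnit.of_mul_eq_one _ hRtR).neg, ?_⟩
  let γ₁ : ℝ → Matrix I9 (Fin 3) ℝ := fun s => colblk 0 0 (-(R s)ᵀ)
  let γ₂ : ℝ → Matrix I9 (Fin 3) ℝ := fun s => colblk 0 1 (-(skew (ω s) * (R s)ᵀ))
  have h₁ : A t * γ₁ t - entrywiseDeriv γ₁ t = γ₂ t := by
    rw [((hasEntrywiseDerivAt_const 0).colblk (hasEntrywiseDerivAt_const 0)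
      (hasEntrywiseDerivAt_neg_transpose (hR t))).entrywiseDeriv_eq, blk3_mul_colblk, colblk_sub]
    simp [γ₂, hRRt]
  have h₂ : A t * γ₂ t - entrywiseDeriv γ₂ t = γ₃ t := by
    rw [((hasEntrywiseDerivAt_const 0).colblk (hasEntrywiseDerivAt_const 1)
      (hasEntrywiseDerivAt_neg_skew_mul_transpose (hω t) (hR t))).entrywiseDeriv_eq,
      blk3_mul_colblk, colblk_sub]
    simp [γ₃, mul_assoc]
  have hΞ : Ξ = fun s => cols3 (γ₁ s) (γ₂ s) (γ₃ s) := funext fun s => blk3_eq_cols3 ..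
  rw [hΞ]
  exact intertwining_of_column_recursion (A t) γ₁ γ₂ γ₃ t h₁ h₂
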